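/- Let S = ⊕_{k≥0} S_k be a commutative graded ring and P = ⊕_{k≥0} P_k a graded S-module such that each P_k is finitely generated as an S_0-module and P is long (P_j ≠ 0 for arbitrarily large j). Let x ∈ S_1 be such that x·P_k = P_{k+1} for all sufficiently large indices k. Then the S-submodule (1 − x)·P of P is not saturated: for every index k there exists an index j ≥ k such that P_j is not contained in (1 − x)·P. -/

import Mathlib

/-- For an additive subgroup `A` of scalars and a set `T` of module elements,
`grSMul A T` is the additive subgroup generated by all products `a • t`
with `a ∈ A` and `t ∈ T`. -/
def grSMul {S M : Type*} [CommRing S] [AddCommGroup M] [Module S M]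
    (A : AddSubgroup S) (T : Set M) : AddSubgroup M :=
  AddSubgroup.closure {x | ∃ a ∈ A, ∃ t ∈ T, x = a • t}

/-!
If a homogeneous `v ∈ P_j` equals `(1 - x) • u`, comparing components in `u = v + x • u` gives
`u_{j+n} = x ^ n • v`, so the finite support of `u` forces `x ^ n • v = 0` for some `n`. If
`P_j ⊆ (1 - x) • P`, this applies to finitely many `S₀`-generators of `P_j`, so one power `x ^ M`
kills `P_j`. Once `x • P_k = P_{k+1}`, `P_{j+n} = x ^ n • P_j`, hence `P_{j'} = 0` for all
`j' ≥ j + M`, contradicting that `P` is long.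
-/

open DirectSum

section Graded

variable {S : Type*} [CommRing S] {𝒜 : ℕ → AddSubgroup S}
  {P : Type*} [AddCommGroup P] [Module S P] (ℳ : ℕ → AddSubgroup P)
  [SetLike.GradedSMul 𝒜 ℳ] [Decomposition ℳ] {x : S} {i : ℕ}

theorem coe_decompose_smul_add (hx : x ∈ 𝒜 i) (u : P) (n : ℕ) :
    (decompose ℳ (x • u) (n + i) : P) = x • (decompose ℳ u n : P) := by
  induction u using Decomposition.inductionOn ℳ with
  | zero => simp
  | @homogeneous l w =>
    have hxw : x • (w : P) ∈ ℳ (l + i) := add_comm i l ▸ SetLike.GradedSMul.smul_mem hx w.2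
    rcases eq_or_ne l n with rfl | hne
    · rw [decompose_of_mem_same ℳ hxw, decompose_of_mem_same ℳ w.2]
    · rw [decompose_of_mem_ne ℳ hxw (by omega), decompose_of_mem_ne ℳ w.2 hne, smul_zero]
  | add a b ha hb =>
    simp only [smul_add, decompose_add, DirectSum.add_apply, AddSubgroup.coe_add, ha, hb]

theorem coe_decompose_smul_of_lt (hx : x ∈ 𝒜 i) (u : P) {n : ℕ} (hn : n < i) :
    (decompose ℳ (x • u) n : P) = 0 := by
  induction u using Decomposition.inductionOn ℳ with
  | zero => simp
  | @homogeneous l w =>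
    have hxw : x • (w : P) ∈ ℳ (i + l) := SetLike.GradedSMul.smul_mem hx w.2
    exact decompose_of_mem_ne ℳ hxw (by omega)
  | add a b ha hb =>
    simp only [smul_add, decompose_add, DirectSum.add_apply, AddSubgroup.coe_add, ha, hb, add_zero]

variable {ℳ}

theorem coe_decompose_of_eq_one_sub_smul (hx : x ∈ 𝒜 1) {j : ℕ} {v u : P} (hv : v ∈ ℳ j)
    (h : v = (1 - x) • u) (n : ℕ) :
    (decompose ℳ u n : P) = if j ≤ n then x ^ (n - j) • v else 0 := by
  have hu : u = v + x • u := by rw [h, sub_smul, one_smul, sub_add_cancel]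
  have hv_comp : ∀ n, (decompose ℳ v n : P) = if j = n then v else 0 := fun n => by
    split_ifs with hjn
    · exact hjn ▸ decompose_of_mem_same ℳ hv
    · exact decompose_of_mem_ne ℳ hv hjn
  induction n with
  | zero =>
    rw [hu, decompose_add, DirectSum.add_apply, AddSubgroup.coe_add, hv_comp,
      coe_decompose_smul_of_lt ℳ hx _ zero_lt_one, add_zero]
    split_ifs <;> first | omega | simp
  | succ n ih =>
    rw [hu, decompose_add, DirectSum.add_apply, AddSubgroup.coe_add, hv_comp,
      coe_decompose_smul_add ℳ hx, ih]
    rcases lt_trichotomy j (n + 1) with hlt | rfl | hgt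
    · rw [if_neg hlt.ne, if_pos (Nat.le_of_lt_succ hlt), if_pos hlt.le, zero_add, smul_smul,
        ← pow_succ', Nat.sub_add_comm (Nat.le_of_lt_succ hlt)]
    · simp
    · simp [hgt.ne', Nat.not_le.mpr hgt, Nat.not_le.mpr (Nat.lt_of_succ_lt hgt)]

theorem exists_pow_smul_eq_zero_of_eq_one_sub_smul (hx : x ∈ 𝒜 1) {j : ℕ} {v u : P}
    (hv : v ∈ ℳ j) (h : v = (1 - x) • u) : ∃ m : ℕ, x ^ m • v = 0 := by
  classical
  obtain ⟨m, hm⟩ := Finset.exists_nat_subset_range (decompose ℳ u).support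
  refine ⟨m, ?_⟩
  have hjm : j + m ∉ (decompose ℳ u).support := fun hmem => by
    have := Finset.mem_range.mp (hm hmem); omega
  have hzero : (decompose ℳ u (j + m) : P) = 0 := by
    rw [DFinsupp.notMem_support_iff.mp hjm, ZeroMemClass.coe_zero]
  simpa [coe_decompose_of_eq_one_sub_smul hx hv h] using hzero

end Graded

theorem grSMul_le_toAddSubgroup {S M : Type*} [CommRing S] [AddCommGroup M] [Module S M]
    (A : AddSubgroup S) {T : Set M} {N : Submodule S M} (hT : T ⊆ N) :
    grSMul A T ≤ N.toAddSubgroup :=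
  (AddSubgroup.closure_le _).2 fun _ ⟨a, _, _, ht, hat⟩ => hat ▸ N.smul_mem a (hT ht)

theorem exists_subset_torsionBy_pow {R M : Type*} [CommSemiring R] [AddCommMonoid M]
    [Module R M] {x : R} {T : Finset M} (hT : ∀ t ∈ T, ∃ m : ℕ, x ^ m • t = 0) :
    ∃ n : ℕ, (T : Set M) ⊆ Submodule.torsionBy R M (x ^ n) := by
  have hev : ∀ t ∈ T, ∀ᶠ n in Filter.atTop, x ^ n • t = 0 := fun t ht => by
    obtain ⟨m, hm⟩ := hT t ht
    refine Filter.eventually_atTop.2 ⟨m, fun n hn => ?_⟩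
    rw [← Nat.sub_add_cancel hn, pow_add, mul_smul, hm, smul_zero]
  obtain ⟨n, hn⟩ := ((Filter.eventually_all_finset T).2 hev).exists
  exact ⟨n, fun t ht => (Submodule.mem_torsionBy_iff _ _).2 (hn t ht)⟩

theorem subset_iterate_image_of_subset_image {α : Type*} {B : ℕ → Set α} {f : α → α} {k : ℕ}
    (h : ∀ l ≥ k, B (l + 1) ⊆ f '' B l) (n : ℕ) : B (k + n) ⊆ f^[n] '' B k := by
  induction n with
  | zero => simp
  | succ n ih =>
    calc B (k + (n + 1)) ⊆ f '' B (k + n) := h (k + n) (Nat.le_add_right k n)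
      _ ⊆ f '' (f^[n] '' B k) := Set.image_mono ih
      _ = f^[n + 1] '' B k := by rw [Set.image_image, ← Set.image_congr
          fun a _ => (Function.iterate_succ_apply' f n a).symm]

theorem eq_bot_of_pow_smul_eq_zero {S P : Type*} [Monoid S] [AddGroup P]
    [DistribMulAction S P] {ℳ : ℕ → AddSubgroup P} {x : S} {j M : ℕ}
    (hsurj : ∀ l ≥ j, (ℳ (l + 1) : Set P) ⊆ (x • ·) '' ℳ l) (hM : ∀ p ∈ ℳ j, x ^ M • p = 0)
    {n : ℕ} (hn : j + M ≤ n) : ℳ n = ⊥ := by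
  obtain ⟨m, rfl⟩ := Nat.exists_eq_add_of_le hn
  refine (AddSubgroup.eq_bot_iff_forall _).2 fun w hw => ?_
  rw [add_assoc] at hw
  obtain ⟨p, hp, rfl⟩ := subset_iterate_image_of_subset_image (B := fun l => (ℳ l : Set P))
    hsurj (M + m) hw
  rw [smul_iterate_apply, add_comm, pow_add, mul_smul, hM p hp, smul_zero]

theorem one_sub_smul_submodule_not_saturated_general
    {S : Type*} [CommRing S] (𝒜 : ℕ → AddSubgroup S)
    {P : Type*} [AddCommGroup P] [Module S P] (ℳ : ℕ → AddSubgroup P)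
    [SetLike.GradedSMul 𝒜 ℳ] [DirectSum.Decomposition ℳ]
    (hcomp_fg : ∀ k : ℕ, ∃ T : Finset P, (T : Set P) ⊆ (ℳ k : Set P) ∧
      grSMul (𝒜 0) (T : Set P) = ℳ k)
    (hlong : ∀ k : ℕ, ∃ j ≥ k, ℳ j ≠ ⊥)
    (x : S) (hx : x ∈ 𝒜 1)
    (hxsurj : ∃ k₀ : ℕ, ∀ k ≥ k₀,
      (fun m : P => x • m) '' (ℳ k : Set P) = (ℳ (k + 1) : Set P)) :
    ∀ k : ℕ, ∃ j ≥ k,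
      ¬ ((ℳ j : Set P) ⊆ {v : P | ∃ u : P, v = (1 - x) • u}) := by
  intro k
  by_contra! hsat
  obtain ⟨k₀, hk₀⟩ := hxsurj
  obtain ⟨T, hTj, hTgen⟩ := hcomp_fg (max k k₀)
  obtain ⟨M, hTM⟩ := exists_subset_torsionBy_pow fun t ht => by
    obtain ⟨u, hu⟩ := hsat (max k k₀) (le_max_left k k₀) (hTj ht)
    exact exists_pow_smul_eq_zero_of_eq_one_sub_smul hx (hTj ht) hu
  have hM : ∀ p ∈ ℳ (max k k₀), x ^ M • p = 0 := fun p hp =>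
    (Submodule.mem_torsionBy_iff _ _).1 (grSMul_le_toAddSubgroup (𝒜 0) hTM (hTgen ▸ hp))
  obtain ⟨n, hn, hne⟩ := hlong (max k k₀ + M)
  exact hne <| eq_bot_of_pow_smul_eq_zero
    (fun l hl => (hk₀ l (le_of_max_le_right hl)).ge) hM hn

/-- Let `P` be a long graded `S`-module whose components are finitely generated over
`S₀`, and let `x ∈ S₁` satisfy `x • P_k = P_{k+1}` for all sufficiently large `k`.
Then the submodule `(1 - x) • P` is not saturated: for every `k` there is a `j ≥ k`
such that `P_j` is not contained in `(1 - x) • P`. -/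
theorem one_sub_smul_submodule_not_saturated
    {S : Type*} [CommRing S] (𝒜 : ℕ → AddSubgroup S) [GradedRing 𝒜]
    {P : Type*} [AddCommGroup P] [Module S P] (ℳ : ℕ → AddSubgroup P)
    [SetLike.GradedSMul 𝒜 ℳ] [DirectSum.Decomposition ℳ]
    (hcomp_fg : ∀ k : ℕ, ∃ T : Finset P, (T : Set P) ⊆ (ℳ k : Set P) ∧
      grSMul (𝒜 0) (T : Set P) = ℳ k)
    (hlong : ∀ k : ℕ, ∃ j ≥ k, ℳ j ≠ ⊥)
    (x : S) (hx : x ∈ 𝒜 1)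
    (hxsurj : ∃ k₀ : ℕ, ∀ k ≥ k₀,
      (fun m : P => x • m) '' (ℳ k : Set P) = (ℳ (k + 1) : Set P)) :
    ∀ k : ℕ, ∃ j ≥ k,
      ¬ ((ℳ j : Set P) ⊆ {v : P | ∃ u : P, v = (1 - x) • u}) :=
  one_sub_smul_submodule_not_saturated_general 𝒜 ℳ hcomp_fg hlong x hx hxsurj
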